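/- arXiv:math/0302277 — 5 statements merged into one kernel-verified Lean document; each statement's English description precedes it below -/
import Mathlib

section
/- Let Q be an anisotropic integral binary quadratic form (Q(n) = 0 implies n = 0 over the rationals). If m, n ∈ Z² satisfy Q(m) = Q(n), then for all sufficiently large primes N there exists B ∈ SO(Q, Z/NZ) with m ≡ nB (mod N). -/
/-!
Write `Q(x, y) = q₁x² + q₂xy + q₃y²` with discriminant `D`. For `u, v` the matrix `S(u, v)` of
multiplication by `u + v√D` scales `Q` by the norm `u² - Dv²`, and for `u = polar(m, n)`,
`v = m₁n₀ - m₀n₁` it sends `n` to `2Q(n)·m` and has norm `4Q(m)Q(n)`. When `Q(m) = Q(n)` and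
`2Q(n)` is a unit, `S / 2Q(n)` is the required element of `SO(Q)`. By anisotropy `Q(n) = 0` forces
`m = n = 0`; otherwise `2Q(n)` is a unit mod every prime `N > |2Q(n)|`.
-/

open Matrix

section CommRing

variable {R : Type*} [CommRing R] (q₁ q₂ q₃ : R)

def binQuad (v : Fin 2 → R) : R := q₁ * v 0 ^ 2 + q₂ * v 0 * v 1 + q₃ * v 1 ^ 2

def binPolar (m n : Fin 2 → R) : R :=
  2 * q₁ * m 0 * n 0 + q₂ * (m 0 * n 1 + m 1 * n 0) + 2 * q₃ * m 1 * n 1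

/-- `u • 1 + v • J` with `J = !![-q₂, 2q₁; -2q₃, q₂]`, `J² = D • 1`: this is `S(u, v)`. -/
def binQuadSimilitude (u v : R) : Matrix (Fin 2) (Fin 2) R :=
  !![u - v * q₂, 2 * v * q₁; -(2 * v * q₃), u + v * q₂]

theorem det_binQuadSimilitude (u v : R) :
    (binQuadSimilitude q₁ q₂ q₃ u v).det = u ^ 2 - discrim q₁ q₂ q₃ * v ^ 2 := by
  rw [binQuadSimilitude, det_fin_two_of, discrim]
  ring

theorem binQuad_smul (c : R) (w : Fin 2 → R) :
    binQuad q₁ q₂ q₃ (c • w) = c ^ 2 * binQuad q₁ q₂ q₃ w := by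
  simp only [binQuad, Pi.smul_apply, smul_eq_mul]
  ring

theorem binQuad_vecMul_binQuadSimilitude (u v : R) (w : Fin 2 → R) :
    binQuad q₁ q₂ q₃ (w ᵥ* binQuadSimilitude q₁ q₂ q₃ u v)
      = (u ^ 2 - discrim q₁ q₂ q₃ * v ^ 2) * binQuad q₁ q₂ q₃ w := by
  simp only [binQuad, vecMul, dotProduct, binQuadSimilitude, of_apply, cons_val', cons_val_zero,
    cons_val_fin_one, Fin.sum_univ_two, cons_val_one, discrim]
  ring

theorem binPolar_sq_sub_discrim_mul_sq (m n : Fin 2 → R) :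
    binPolar q₁ q₂ q₃ m n ^ 2 - discrim q₁ q₂ q₃ * (m 1 * n 0 - m 0 * n 1) ^ 2
      = 4 * binQuad q₁ q₂ q₃ m * binQuad q₁ q₂ q₃ n := by
  rw [binPolar, binQuad, binQuad, discrim]
  ring

theorem vecMul_binQuadSimilitude_binPolar (m n : Fin 2 → R) :
    n ᵥ* binQuadSimilitude q₁ q₂ q₃ (binPolar q₁ q₂ q₃ m n) (m 1 * n 0 - m 0 * n 1)
      = (2 * binQuad q₁ q₂ q₃ n) • m := by
  ext i
  fin_cases i <;>
  · simp only [vecMul, dotProduct, binQuadSimilitude, binPolar, of_apply, cons_val', cons_val_zero,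
      cons_val_one, Fin.zero_eta, Fin.mk_one, cons_val_fin_one, Fin.sum_univ_two, binQuad,
      Pi.smul_apply, smul_eq_mul]
    ring

end CommRing

theorem binQuad_intCast {R : Type*} [CommRing R] (q₁ q₂ q₃ : ℤ) (v : Fin 2 → ℤ) :
    ((binQuad q₁ q₂ q₃ v : ℤ) : R) = binQuad (q₁ : R) q₂ q₃ (fun i => (v i : R)) := by
  simp [binQuad]

theorem exists_det_eq_one_binQuad_vecMul_of_binQuad_eq {K : Type*} [Field K] (q₁ q₂ q₃ : K)
    (m n : Fin 2 → K) (hQ : binQuad q₁ q₂ q₃ m = binQuad q₁ q₂ q₃ n)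
    (hn : 2 * binQuad q₁ q₂ q₃ n ≠ 0) :
    ∃ B : Matrix (Fin 2) (Fin 2) K, B.det = 1 ∧
      (∀ w, binQuad q₁ q₂ q₃ (w ᵥ* B) = binQuad q₁ q₂ q₃ w) ∧ m = n ᵥ* B := by
  set c := (2 * binQuad q₁ q₂ q₃ n)⁻¹
  set S := binQuadSimilitude q₁ q₂ q₃ (binPolar q₁ q₂ q₃ m n) (m 1 * n 0 - m 0 * n 1)
  have hnorm : binPolar q₁ q₂ q₃ m n ^ 2 - discrim q₁ q₂ q₃ * (m 1 * n 0 - m 0 * n 1) ^ 2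
      = (2 * binQuad q₁ q₂ q₃ n) ^ 2 := by
    rw [binPolar_sq_sub_discrim_mul_sq, hQ]
    ring
  have hc : c ^ 2 * (2 * binQuad q₁ q₂ q₃ n) ^ 2 = 1 := by
    rw [← mul_pow, inv_mul_cancel₀ hn, one_pow]
  refine ⟨c • S, ?_, fun w => ?_, ?_⟩
  · rw [det_smul, Fintype.card_fin, det_binQuadSimilitude, hnorm, hc]
  · rw [vecMul_smul, binQuad_smul, binQuad_vecMul_binQuadSimilitude, hnorm, ← mul_assoc, hc,
      one_mul]
  · rw [vecMul_smul, vecMul_binQuadSimilitude_binPolar, smul_smul, inv_mul_cancel₀ hn, one_smul]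

theorem eq_zero_of_binQuad_eq_zero {q₁ q₂ q₃ : ℤ}
    (haniso : ∀ x y : ℚ, (q₁ : ℚ) * x ^ 2 + q₂ * x * y + q₃ * y ^ 2 = 0 → x = 0 ∧ y = 0)
    {v : Fin 2 → ℤ} (hv : binQuad q₁ q₂ q₃ v = 0) : v = 0 := by
  have hvℚ := haniso (v 0) (v 1) (by exact_mod_cast hv)
  ext i
  fin_cases i
  · exact_mod_cast hvℚ.1
  · exact_mod_cast hvℚ.2

/-- If the integral binary quadratic form
`Q(x,y) = q₁x² + q₂xy + q₃y²` is anisotropic over `ℚ`, and `m, n ∈ ℤ²`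
satisfy `Q(m) = Q(n)`, then for all sufficiently large primes `N` there is
`B ∈ SO(Q, ZMod N)` with `m ≡ nB (mod N)`. -/
theorem exists_so_relating_equal_values
    (q₁ q₂ q₃ : ℤ)
    (haniso : ∀ x y : ℚ, (q₁ : ℚ) * x ^ 2 + q₂ * x * y + q₃ * y ^ 2 = 0 → x = 0 ∧ y = 0)
    (m n : Fin 2 → ℤ)
    (hQ : q₁ * (m 0) ^ 2 + q₂ * (m 0) * (m 1) + q₃ * (m 1) ^ 2
        = q₁ * (n 0) ^ 2 + q₂ * (n 0) * (n 1) + q₃ * (n 1) ^ 2) :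
    ∃ N₀ : ℕ, ∀ N : ℕ, N.Prime → N₀ < N →
      ∃ B : Matrix (Fin 2) (Fin 2) (ZMod N),
        B.det = 1 ∧
        (∀ v : Fin 2 → ZMod N,
          (q₁ : ZMod N) * (Matrix.vecMul v B 0) ^ 2 + q₂ * (Matrix.vecMul v B 0) * (Matrix.vecMul v B 1)
            + q₃ * (Matrix.vecMul v B 1) ^ 2
          = (q₁ : ZMod N) * (v 0) ^ 2 + q₂ * (v 0) * (v 1) + q₃ * (v 1) ^ 2) ∧
        (fun i => ((m i : ZMod N))) = Matrix.vecMul (fun i => ((n i : ZMod N))) B := by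
  change binQuad q₁ q₂ q₃ m = binQuad q₁ q₂ q₃ n at hQ
  by_cases hn : binQuad q₁ q₂ q₃ n = 0
  · obtain rfl := eq_zero_of_binQuad_eq_zero haniso hn
    obtain rfl := eq_zero_of_binQuad_eq_zero haniso (hQ.trans hn)
    exact ⟨0, fun N _ _ => ⟨1, det_one, fun v => by rw [vecMul_one], by rw [vecMul_one]⟩⟩
  refine ⟨(2 * binQuad q₁ q₂ q₃ n).natAbs, fun N hN hlt => ?_⟩
  have : Fact N.Prime := ⟨hN⟩
  have hnN : ((2 * binQuad q₁ q₂ q₃ n : ℤ) : ZMod N) ≠ 0 := by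
    rw [Ne, ZMod.intCast_zmod_eq_zero_iff_dvd]
    intro hdvd
    have := Int.natAbs_le_of_dvd_ne_zero hdvd (mul_ne_zero two_ne_zero hn)
    omega
  apply exists_det_eq_one_binQuad_vecMul_of_binQuad_eq
  · rw [← binQuad_intCast, ← binQuad_intCast, hQ]
  · simpa [binQuad_intCast] using hnN
end

section
/- Let N be an odd prime and K a real quadratic field in which N is inert, with O the ring of integers (or an order) reduced mod N giving the field F_{N²} = F_N(√D). Let a, b ∈ F_{N²} with a ≠ 0, and let T = {γ ∈ F_{N²} : Norm(γ) = 1} be the norm-one torus. If the equation γ₁ = aγ₂ + b with γ₁, γ₂ ∈ T has more than two solutions γ₂, then b = 0 and Norm(a) = 1. -/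
private lemma quad_coeffs_zero {F : Type*} [Field F] {c2 c1 c0 x y z : F}
    (hxy : x ≠ y) (hxz : x ≠ z) (hyz : y ≠ z)
    (hx : c2 * x ^ 2 + c1 * x + c0 = 0)
    (hy : c2 * y ^ 2 + c1 * y + c0 = 0)
    (hz : c2 * z ^ 2 + c1 * z + c0 = 0) :
    c2 = 0 ∧ c1 = 0 ∧ c0 = 0 := by
  have h1 : c2 * (x + y) + c1 = 0 := by
    apply mul_left_cancel₀ (sub_ne_zero.mpr hxy)
    linear_combination hx - hy
  have h2 : c2 * (x + z) + c1 = 0 := by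
    apply mul_left_cancel₀ (sub_ne_zero.mpr hxz)
    linear_combination hx - hz
  have hc2 : c2 = 0 := by
    apply mul_left_cancel₀ (sub_ne_zero.mpr hyz)
    linear_combination h1 - h2
  have hc1 : c1 = 0 := by linear_combination h1 - (x + y) * hc2
  exact ⟨hc2, hc1, by linear_combination hx - x ^ 2 * hc2 - x * hc1⟩

private lemma torus_root (N : ℕ) [Fact N.Prime] (a b γ : GaloisField N 2)
    (h1 : γ ^ (N + 1) = 1) (h2 : (a * γ + b) ^ (N + 1) = 1) :
    a * b ^ N * γ ^ 2 + (a ^ (N + 1) + b ^ (N + 1) - 1) * γ + a ^ N * b = 0 := by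
  rw [pow_succ] at h1 h2
  rw [add_pow_char, mul_pow] at h2
  rw [pow_succ a, pow_succ b]
  generalize γ ^ N = u at *
  generalize a ^ N = v at *
  generalize b ^ N = w at *
  linear_combination γ * h2 - (v * a * γ + v * b) * h1

/-- In `F_{N²}` (`N` an odd prime), with `T` the norm-one torus
(`Norm γ = γ^{N+1}`), if `a ≠ 0` and the equation `γ₁ = aγ₂ + b` with
`γ₁, γ₂ ∈ T` has more than two solutions `γ₂`, then `b = 0` and `Norm a = 1`. -/
theorem torus_line_intersection
    (N : ℕ) [Fact N.Prime] (hodd : Odd N)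
    (a b : GaloisField N 2) (ha : a ≠ 0)
    (hsol : 2 < {γ₂ : GaloisField N 2 |
        γ₂ ^ (N + 1) = 1 ∧ (a * γ₂ + b) ^ (N + 1) = 1}.ncard) :
    b = 0 ∧ a ^ (N + 1) = 1 := by
  rw [Set.two_lt_ncard (Set.toFinite _)] at hsol
  obtain ⟨x, ⟨hx1, hx2⟩, y, ⟨hy1, hy2⟩, z, ⟨hz1, hz2⟩, hxy, hxz, hyz⟩ := hsol
  obtain ⟨hc2, hc1, -⟩ := quad_coeffs_zero hxy hxz hyz
    (torus_root N a b x hx1 hx2) (torus_root N a b y hy1 hy2)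
    (torus_root N a b z hz1 hz2)
  have hb : b = 0 := by
    rcases mul_eq_zero.mp hc2 with h | h
    · exact absurd h ha
    · exact pow_eq_zero_iff (Nat.Prime.ne_zero (Fact.out)) |>.mp h
  refine ⟨hb, ?_⟩
  rw [hb, zero_pow (Nat.succ_ne_zero N)] at hc1
  linear_combination hc1
end

section
/- Let F_{N²} = F_N(√D) with N an odd prime and D a non-square in F_N, let T be the norm-one torus, and let κ, λ, μ, ν ∈ F_{N²} be nonzero elements. Then the number of triples (β₂, β₃, β₄) ∈ T³ satisfying κ - λβ₂ + μβ₃ - νβ₄ = 0 is at most 3(N+1). -/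
open Polynomial

/-- Any finset of roots of a nonzero polynomial has at most `natDegree` elements. -/
private lemma card_le_of_all_roots {K : Type*} [Field K] [DecidableEq K]
    (p : K[X]) (hp : p ≠ 0) (s : Finset K) (hs : ∀ x ∈ s, p.eval x = 0) :
    s.card ≤ p.natDegree := by
  have hsub : s ⊆ p.roots.toFinset := by
    intro x hx
    simp only [Multiset.mem_toFinset, mem_roots, hp, ne_eq, not_false_eq_true, true_and]
    exact hs x hx
  calc s.card ≤ p.roots.toFinset.card := Finset.card_le_card hsub
    _ ≤ Multiset.card p.roots := Multiset.toFinset_card_le _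
    _ ≤ p.natDegree := p.card_roots'

/-- In `F_{N²}` (`N` an odd prime), with `T` the norm-one torus of
order `N+1`, for nonzero `κ, λ, μ, ν` the number of triples
`(β₂, β₃, β₄) ∈ T³` with `κ - λβ₂ + μβ₃ - νβ₄ = 0` is at most `3(N+1)`. -/
theorem torus_triple_count
    (N : ℕ) [Fact N.Prime] (hodd : Odd N)
    (κ l μ ν : GaloisField N 2) (hκ : κ ≠ 0) (hl : l ≠ 0) (hμ : μ ≠ 0) (hν : ν ≠ 0) :
    {β : GaloisField N 2 × GaloisField N 2 × GaloisField N 2 |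
        β.1 ^ (N + 1) = 1 ∧ β.2.1 ^ (N + 1) = 1 ∧ β.2.2 ^ (N + 1) = 1 ∧
        κ - l * β.1 + μ * β.2.1 - ν * β.2.2 = 0}.ncard ≤ 3 * (N + 1) := by
  classical
  haveI : Fintype (GaloisField N 2) := Fintype.ofFinite _
  -- torus as a finset
  set Tf : Finset (GaloisField N 2) := Finset.univ.filter (fun x => x ^ (N + 1) = 1) with hTf
  have hTcard : Tf.card ≤ N + 1 := by
    have := card_le_of_all_roots ((X : (GaloisField N 2)[X]) ^ (N + 1) - C 1)
      (X_pow_sub_C_ne_zero (Nat.succ_pos N) 1) Tf ?_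
    · rwa [natDegree_X_pow_sub_C] at this
    · intro x hx
      simp only [hTf, Finset.mem_filter] at hx
      simp [hx.2]
  -- the solution set as a finset
  set S : Finset (GaloisField N 2 × GaloisField N 2 × GaloisField N 2) := Finset.univ.filter (fun β =>
      β.1 ^ (N + 1) = 1 ∧ β.2.1 ^ (N + 1) = 1 ∧ β.2.2 ^ (N + 1) = 1 ∧
      κ - l * β.1 + μ * β.2.1 - ν * β.2.2 = 0) with hSdef
  have hset : {β : GaloisField N 2 × GaloisField N 2 × GaloisField N 2 |
        β.1 ^ (N + 1) = 1 ∧ β.2.1 ^ (N + 1) = 1 ∧ β.2.2 ^ (N + 1) = 1 ∧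
        κ - l * β.1 + μ * β.2.1 - ν * β.2.2 = 0} = ↑S := by
    ext β; simp [hSdef]
  rw [hset, Set.ncard_coe_finset]
  -- split on whether l * β.1 = κ
  set S1 : Finset (GaloisField N 2 × GaloisField N 2 × GaloisField N 2) := S.filter (fun β => l * β.1 = κ) with hS1
  set S2 : Finset (GaloisField N 2 × GaloisField N 2 × GaloisField N 2) := S.filter (fun β => ¬ l * β.1 = κ) with hS2
  have hsplit : S.card = S1.card + S2.card :=
    (Finset.card_filter_add_card_filter_not _).symm
  -- membership unpacking
  have hmemS : ∀ β ∈ S, β.1 ^ (N + 1) = 1 ∧ β.2.1 ^ (N + 1) = 1 ∧ β.2.2 ^ (N + 1) = 1 ∧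
      κ - l * β.1 + μ * β.2.1 - ν * β.2.2 = 0 := by
    intro β hβ; simpa [hSdef] using hβ
  -- bound S1 : β.1 and β.2.2 are determined by β.2.1
  have hb1 : S1.card ≤ N + 1 := by
    have hinj : Set.InjOn (fun β : GaloisField N 2 × GaloisField N 2 × GaloisField N 2 => β.2.1) ↑S1 := by
      intro β hβ γ hγ h
      simp only [Finset.coe_filter, Set.mem_setOf_eq, hS1] at hβ hγ
      obtain ⟨hβS, hβ1⟩ := hβ
      obtain ⟨hγS, hγ1⟩ := hγ
      obtain ⟨_, _, _, hβe⟩ := hmemS β hβS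
      obtain ⟨_, _, _, hγe⟩ := hmemS γ hγS
      have h1 : β.1 = γ.1 := by
        have := hβ1.trans hγ1.symm
        exact mul_left_cancel₀ hl this
      have h3 : β.2.2 = γ.2.2 := by
        apply mul_left_cancel₀ hν
        simp only at h
        linear_combination -hβe + hγe - l * h1 + μ * h
      exact Prod.ext h1 (Prod.ext h h3)
    have hmaps : ∀ β ∈ S1, β.2.1 ∈ Tf := by
      intro β hβ
      simp only [hS1, Finset.mem_filter] at hβ
      obtain ⟨_, h2, _, _⟩ := hmemS β hβ.1
      simp [hTf, h2]
    calc S1.card ≤ Tf.card := Finset.card_le_card_of_injOn _ hmaps hinj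
      _ ≤ N + 1 := hTcard
  -- bound S2 : fiber over β.1 = a has at most 2 elements
  have hb2 : S2.card ≤ 2 * (N + 1) := by
    have hmaps : ∀ β ∈ S2, β.1 ∈ Tf := by
      intro β hβ
      simp only [hS2, Finset.mem_filter] at hβ
      obtain ⟨h1, _, _, _⟩ := hmemS β hβ.1
      simp [hTf, h1]
    have hfib : ∀ a ∈ Tf, (S2.filter (fun β => β.1 = a)).card ≤ 2 := by
      intro a ha
      by_cases hcase : (S2.filter (fun β => β.1 = a)).Nonempty
      swap
      · simp [Finset.not_nonempty_iff_eq_empty.mp hcase]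
      obtain ⟨β₀, hβ₀⟩ := hcase
      have hla : l * a ≠ κ := by
        simp only [hS2, Finset.mem_filter] at hβ₀
        rw [← hβ₀.2]; exact hβ₀.1.2
      set c : GaloisField N 2 := κ - l * a with hc
      have hcne : c ≠ 0 := by
        intro h; rw [hc, sub_eq_zero] at h; exact hla h.symm
      set p : (GaloisField N 2)[X] := C (c ^ N * μ) * X ^ 2 +
          C (c ^ (N + 1) + μ ^ (N + 1) - ν ^ (N + 1)) * X + C (μ ^ N * c) with hp
      have hlead : c ^ N * μ ≠ 0 := mul_ne_zero (pow_ne_zero _ hcne) hμ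
      have hpdeg : p.natDegree = 2 := natDegree_quadratic hlead
      have hpne : p ≠ 0 := by
        intro h; rw [h] at hpdeg; simp at hpdeg
      -- every fiber element's middle coordinate is a root of p
      have hroot : ∀ β ∈ S2.filter (fun β => β.1 = a), p.eval β.2.1 = 0 := by
        intro β hβ
        simp only [Finset.mem_filter, hS2] at hβ
        obtain ⟨⟨hβS, _⟩, hβa⟩ := hβ
        obtain ⟨_, h2, h3, heq⟩ := hmemS β hβS
        set b : GaloisField N 2 := β.2.1
        set d : GaloisField N 2 := β.2.2
        have hcb : c + μ * b = ν * d := by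
          rw [hc]; linear_combination heq + congrArg (fun x => l * x) hβa
        have key : (c + μ * b) ^ (N + 1) = ν ^ (N + 1) := by
          rw [hcb, mul_pow, h3, mul_one]
        have hfr : (c + μ * b) ^ N = c ^ N + μ ^ N * b ^ N := by
          rw [add_pow_char, mul_pow]
        have key' : (c ^ N + μ ^ N * b ^ N) * (c + μ * b) = ν ^ (N + 1) := by
          rw [← hfr, ← pow_succ]; exact key
        have hbN : b ^ N * b = 1 := by rw [← pow_succ]; exact h2
        simp only [hp, eval_add, eval_mul, eval_pow, eval_C, eval_X]
        linear_combination b * key' - (μ ^ N * c + μ ^ (N + 1) * b) * hbN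
      -- the fiber injects into β.2.1
      have hinj : Set.InjOn (fun β : GaloisField N 2 × GaloisField N 2 × GaloisField N 2 => β.2.1)
          ↑(S2.filter (fun β => β.1 = a)) := by
        intro β hβ γ hγ h
        simp only [Finset.coe_filter, Set.mem_setOf_eq, hS2, Finset.mem_filter] at hβ hγ
        obtain ⟨⟨hβS, _⟩, hβa⟩ := hβ
        obtain ⟨⟨hγS, _⟩, hγa⟩ := hγ
        obtain ⟨_, _, _, hβe⟩ := hmemS β hβS
        obtain ⟨_, _, _, hγe⟩ := hmemS γ hγS
        have h1 : β.1 = γ.1 := hβa.trans hγa.symm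
        have h3 : β.2.2 = γ.2.2 := by
          apply mul_left_cancel₀ hν
          simp only at h
          linear_combination -hβe + hγe - l * h1 + μ * h
        exact Prod.ext h1 (Prod.ext h h3)
      have := card_le_of_all_roots p hpne
        ((S2.filter (fun β => β.1 = a)).image (fun β => β.2.1)) ?_
      · rw [Finset.card_image_of_injOn hinj] at this
        omega
      · intro x hx
        obtain ⟨β, hβ, rfl⟩ := Finset.mem_image.mp hx
        exact hroot β hβ
    calc S2.card ≤ 2 * Tf.card :=
        Finset.card_le_mul_card_image_of_maps_to hmaps 2 hfib
      _ ≤ 2 * (N + 1) := by omega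
  omega
end

section
/- Let F_{N²} = F_N(√D), T the norm-one torus, and ν₁,ν₂,ν₃,ν₄ ∈ F_{N²}* nonzero with norms N₁,N₂,N₃,N₄. Write Im(x+y√D) = y. Consider quadruples (β₁,β₂,β₃,β₄) ∈ T⁴ with μᵢ = νᵢβᵢ satisfying μ₁ - μ₂ + μ₃ - μ₄ = 0 and Im(conj(μ₁)μ₂ + conj(μ₃)μ₄) = 0. If N₁ = N₂ = N₃ = N₄, then the set of solutions is exactly the union of the two families {μ₁ = μ₂, μ₃ = μ₄} and {μ₂ = μ₃, μ₁ = μ₄}, each of cardinality |T|², whose intersection has cardinality |T|. -/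
/-!
Write `μᵢ = νᵢβᵢ` and `σ x = x ^ N` for the conjugation of `F_{N²}/F_N`. All `μᵢ` have the same
norm `μᵢ σ(μᵢ)`, and together with the linear relation and the `σ`-invariance of
`σ(μ₀)μ₁ + σ(μ₂)μ₃` this gives `2 (μ₀ - μ₁)(σ μ₀ - σ μ₃) = 0`; so `μ₀ = μ₁` or `μ₀ = μ₃`, and the
linear relation then forces the other pair to agree.

For the counts, `β ↦ (νᵢβᵢ)ᵢ` maps `T⁴` bijectively onto `C⁴`, where `C = ν₀T` is the circle of
norm `N(ν₀)`. The two families become the quadruples `(x, x, y, y)` and `(x, y, y, x)` with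
`x, y ∈ C`, their intersection the constant quadruples, and `|C| = |T| = N + 1` because `T` is
the subgroup of order `N + 1` of the cyclic group `F_{N²}ˣ` of order `N² - 1`.
-/

open Set Function

theorem sub_add_sub_eq_zero_and_isFixedPt_iff {R : Type*} [CommRing R] [IsDomain R]
    (h2 : (2 : R) ≠ 0) {σ : R →+* R} (hσ : Involutive σ) {a b c d : R}
    (hnorm : a * σ a + c * σ c = b * σ b + d * σ d) :
    (a - b + c - d = 0 ∧ IsFixedPt σ (σ a * b + σ c * d)) ↔ (a = b ∧ c = d) ∨ (b = c ∧ a = d) := by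
  constructor
  · rintro ⟨hlin, hfix⟩
    have hlin' : σ a - σ b + σ c - σ d = 0 := by simpa using congrArg σ hlin
    have hfix' : a * σ b + c * σ d = σ a * b + σ c * d := by
      simpa only [IsFixedPt, map_add, map_mul, hσ _, mul_comm] using hfix
    have key : 2 * (a - b) * (σ a - σ d) = 0 := by
      linear_combination hnorm + hfix' + (a - b) * hlin' - (σ c + σ d) * hlin
    rcases mul_eq_zero.mp key with h | h
    · have hab : a = b := sub_eq_zero.mp ((mul_eq_zero.mp h).resolve_left h2)
      exact Or.inl ⟨hab, by linear_combination hlin - hab⟩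
    · have had : a = d := hσ.injective (sub_eq_zero.mp h)
      exact Or.inr ⟨by linear_combination had - hlin, had⟩
  · rintro (⟨rfl, rfl⟩ | ⟨rfl, rfl⟩) <;>
      refine ⟨by ring, ?_⟩ <;>
      simp only [IsFixedPt, map_add, map_mul, hσ _] <;> ring

theorem FiniteField.ncard_setOf_pow_eq_one {K : Type*} [Field K] [Finite K] {n : ℕ}
    (hn : n ∣ Nat.card K - 1) : {x : K | x ^ n = 1}.ncard = n := by
  obtain ⟨g, hg⟩ := IsCyclic.exists_ofOrder_eq_natCard (α := Kˣ)
  have hg : IsPrimitiveRoot (g : K) (Nat.card K - 1) :=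
    IsPrimitiveRoot.coe_units_iff.mpr (Nat.card_units K ▸ hg ▸ IsPrimitiveRoot.orderOf g)
  obtain ⟨m, hm⟩ := hn
  have hpos : 0 < Nat.card K - 1 := by have := Finite.one_lt_card (α := K); omega
  have hm0 : m ≠ 0 := by rintro rfl; omega
  have hn0 : 0 < n := Nat.pos_of_ne_zero (by rintro rfl; omega)
  have hζ : IsPrimitiveRoot ((g : K) ^ m) n := by
    simpa [hm, Nat.mul_div_cancel _ (Nat.pos_of_ne_zero hm0)] using
      hg.pow_of_dvd hm0 (hm ▸ dvd_mul_left m n)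
  classical
  have hset : {x : K | x ^ n = 1} = ↑(Polynomial.nthRootsFinset n (1 : K)) := by
    ext x; simp [Polynomial.mem_nthRootsFinset hn0]
  rw [hset, ncard_coe_finset, hζ.card_nthRootsFinset]

theorem ncard_setOf_pow_eq_pow {K : Type*} [Field K] (n : ℕ) {a : K} (ha : a ≠ 0) :
    {x : K | x ^ n = a ^ n}.ncard = {x : K | x ^ n = 1}.ncard := by
  have himage : {x : K | x ^ n = a ^ n} = (a * ·) '' {x : K | x ^ n = 1} := by
    ext x
    refine ⟨fun hx => ⟨x / a, ?_, mul_div_cancel₀ x ha⟩, ?_⟩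
    · simp [div_pow, hx.out, pow_ne_zero n ha]
    · rintro ⟨y, hy, rfl⟩
      simp [mul_pow, hy.out]
  rw [himage, ncard_image_of_injective _ (mul_right_injective₀ ha)]

theorem GaloisField.frobenius_involutive (p : ℕ) [Fact p.Prime] :
    Involutive (frobenius (GaloisField p 2) p) := fun x => by
  have := Fintype.ofFinite (GaloisField p 2)
  simpa [frobenius_def, ← pow_mul, ← sq, ← Nat.card_eq_fintype_card,
    GaloisField.card p 2 two_ne_zero] using FiniteField.pow_card x

theorem GaloisField.ncard_setOf_pow_succ_eq_one (p : ℕ) [Fact p.Prime] :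
    {x : GaloisField p 2 | x ^ (p + 1) = 1}.ncard = p + 1 := by
  refine FiniteField.ncard_setOf_pow_eq_one ⟨p - 1, ?_⟩
  have : 1 ≤ p := (Fact.out : p.Prime).one_le
  rw [GaloisField.card p 2 two_ne_zero]
  zify [this, Nat.one_le_pow 2 p this]
  ring

theorem ncard_setOf_pow_eq_one_and_scaled {K ι : Type*} [Field K] (n : ℕ) {c : K} {ν : ι → K}
    (hν : ∀ i, ν i ≠ 0) (hνc : ∀ i, ν i ^ n = c) (P : (ι → K) → Prop) :
    {β : ι → K | (∀ i, β i ^ n = 1) ∧ P (fun i => ν i * β i)}.ncard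
      = {μ : ι → K | (∀ i, μ i ^ n = c) ∧ P μ}.ncard := by
  have hmem : ∀ β : ι → K, (∀ i, (ν i * β i) ^ n = c) ↔ ∀ i, β i ^ n = 1 := fun β =>
    forall_congr' fun i => by rw [mul_pow, ← hνc i, mul_eq_left₀ (pow_ne_zero n (hν i))]
  have hpre : {β : ι → K | (∀ i, β i ^ n = 1) ∧ P (fun i => ν i * β i)}
      = (fun β i => ν i * β i) ⁻¹' {μ : ι → K | (∀ i, μ i ^ n = c) ∧ P μ} := by
    ext β
    simp only [mem_ofPred_eq, mem_preimage, hmem]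
  refine hpre ▸ ncard_preimage_of_injective_subset_range ?_ fun μ _ => ⟨fun i => μ i / ν i, ?_⟩
  · exact fun β β' h => funext fun i => mul_left_cancel₀ (hν i) (congrFun h i)
  · exact funext fun i => mul_div_cancel₀ (μ i) (hν i)

section

variable {α : Type*} (C : Set α)

theorem ncard_setOf_forall_mem_and_eq_and_eq :
    {μ : Fin 4 → α | (∀ i, μ i ∈ C) ∧ μ 0 = μ 1 ∧ μ 2 = μ 3}.ncard = C.ncard ^ 2 := by
  have himage : {μ : Fin 4 → α | (∀ i, μ i ∈ C) ∧ μ 0 = μ 1 ∧ μ 2 = μ 3}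
      = (fun p : α × α => ![p.1, p.1, p.2, p.2]) '' C ×ˢ C := by
    ext μ
    refine ⟨fun ⟨hC, h01, h23⟩ => ⟨(μ 0, μ 2), ⟨hC 0, hC 2⟩, ?_⟩, ?_⟩
    · ext i; fin_cases i <;> simp [h01, h23]
    · rintro ⟨⟨x, y⟩, ⟨hx, hy⟩, rfl⟩
      exact ⟨fun i => by fin_cases i <;> assumption, rfl, rfl⟩
  have hinj : Injective fun p : α × α => ![p.1, p.1, p.2, p.2] :=
    fun p q h => Prod.ext (congrFun h 0) (congrFun h 2)
  rw [himage, ncard_image_of_injective _ hinj, ncard_prod, sq]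

theorem ncard_setOf_forall_mem_and_eq_and_eq' :
    {μ : Fin 4 → α | (∀ i, μ i ∈ C) ∧ μ 1 = μ 2 ∧ μ 0 = μ 3}.ncard = C.ncard ^ 2 := by
  have himage : {μ : Fin 4 → α | (∀ i, μ i ∈ C) ∧ μ 1 = μ 2 ∧ μ 0 = μ 3}
      = (fun p : α × α => ![p.1, p.2, p.2, p.1]) '' C ×ˢ C := by
    ext μ
    refine ⟨fun ⟨hC, h12, h03⟩ => ⟨(μ 0, μ 1), ⟨hC 0, hC 1⟩, ?_⟩, ?_⟩
    · ext i; fin_cases i <;> simp [h12, h03]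
    · rintro ⟨⟨x, y⟩, ⟨hx, hy⟩, rfl⟩
      exact ⟨fun i => by fin_cases i <;> assumption, rfl, rfl⟩
  have hinj : Injective fun p : α × α => ![p.1, p.2, p.2, p.1] :=
    fun p q h => Prod.ext (congrFun h 0) (congrFun h 1)
  rw [himage, ncard_image_of_injective _ hinj, ncard_prod, sq]

theorem ncard_setOf_forall_mem_and_all_eq :
    {μ : Fin 4 → α | (∀ i, μ i ∈ C) ∧ (μ 0 = μ 1 ∧ μ 2 = μ 3) ∧ μ 1 = μ 2 ∧ μ 0 = μ 3}.ncard
      = C.ncard := by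
  have himage : {μ : Fin 4 → α | (∀ i, μ i ∈ C) ∧ (μ 0 = μ 1 ∧ μ 2 = μ 3) ∧ μ 1 = μ 2 ∧ μ 0 = μ 3}
      = (fun x : α => fun _ => x) '' C := by
    ext μ
    refine ⟨fun ⟨hC, ⟨h01, h23⟩, h12, _⟩ => ⟨μ 0, hC 0, ?_⟩, ?_⟩
    · ext i; fin_cases i <;> simp [h01, h12, h23]
    · rintro ⟨x, hx, rfl⟩
      exact ⟨fun _ => hx, ⟨rfl, rfl⟩, rfl, rfl⟩
  rw [himage, ncard_image_of_injective _ fun x y h => congrFun h 0]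

end

/-- In `F_{N²}` with norm-one torus `T` of order `N+1`, conjugation
given by the Frobenius `x ↦ x^N`, and nonzero `ν₀,ν₁,ν₂,ν₃` of equal norm, the
quadruples `(β₀,β₁,β₂,β₃) ∈ T⁴`, with `μᵢ = νᵢβᵢ`, satisfying `μ₀-μ₁+μ₂-μ₃ = 0`
and `Im(conj(μ₀)μ₁ + conj(μ₂)μ₃) = 0` (i.e. that element is Frobenius-fixed) form
exactly the union of the two families `{μ₀ = μ₁, μ₂ = μ₃}` and `{μ₁ = μ₂, μ₀ = μ₃}`,
each of cardinality `|T|² = (N+1)²`, whose intersection has cardinality `|T| = N+1`. -/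
theorem quadruple_solutions_all_norms_equal
    (N : ℕ) [Fact N.Prime] (hodd : Odd N)
    (ν : Fin 4 → GaloisField N 2) (hν : ∀ i, ν i ≠ 0)
    (hnorm : ∀ i j, ν i * (ν i) ^ N = ν j * (ν j) ^ N) :
    {β : Fin 4 → GaloisField N 2 | (∀ i, β i ^ (N + 1) = 1) ∧
        ν 0 * β 0 - ν 1 * β 1 + ν 2 * β 2 - ν 3 * β 3 = 0 ∧
        ((ν 0 * β 0) ^ N * (ν 1 * β 1) + (ν 2 * β 2) ^ N * (ν 3 * β 3)) ^ N
          = (ν 0 * β 0) ^ N * (ν 1 * β 1) + (ν 2 * β 2) ^ N * (ν 3 * β 3)}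
      = {β : Fin 4 → GaloisField N 2 | (∀ i, β i ^ (N + 1) = 1) ∧
            ν 0 * β 0 = ν 1 * β 1 ∧ ν 2 * β 2 = ν 3 * β 3}
        ∪ {β : Fin 4 → GaloisField N 2 | (∀ i, β i ^ (N + 1) = 1) ∧
            ν 1 * β 1 = ν 2 * β 2 ∧ ν 0 * β 0 = ν 3 * β 3} ∧
    {β : Fin 4 → GaloisField N 2 | (∀ i, β i ^ (N + 1) = 1) ∧
        ν 0 * β 0 = ν 1 * β 1 ∧ ν 2 * β 2 = ν 3 * β 3}.ncard = (N + 1) ^ 2 ∧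
    {β : Fin 4 → GaloisField N 2 | (∀ i, β i ^ (N + 1) = 1) ∧
        ν 1 * β 1 = ν 2 * β 2 ∧ ν 0 * β 0 = ν 3 * β 3}.ncard = (N + 1) ^ 2 ∧
    ({β : Fin 4 → GaloisField N 2 | (∀ i, β i ^ (N + 1) = 1) ∧
        ν 0 * β 0 = ν 1 * β 1 ∧ ν 2 * β 2 = ν 3 * β 3}
      ∩ {β : Fin 4 → GaloisField N 2 | (∀ i, β i ^ (N + 1) = 1) ∧
        ν 1 * β 1 = ν 2 * β 2 ∧ ν 0 * β 0 = ν 3 * β 3}).ncard = N + 1 := by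
  have h2 : (2 : GaloisField N 2) ≠ 0 := Ring.two_ne_zero <| by
    rw [ringChar.eq (GaloisField N 2) N]
    rintro rfl
    exact Nat.not_odd_iff_even.mpr even_two hodd
  have hνc : ∀ i, ν i ^ (N + 1) = ν 0 ^ (N + 1) := fun i => by rw [pow_succ', pow_succ', hnorm]
  have hμ : ∀ β : Fin 4 → GaloisField N 2, (∀ i, β i ^ (N + 1) = 1) →
      ∀ i, ν i * β i * frobenius _ N (ν i * β i) = ν 0 ^ (N + 1) := fun β hβ i => by
    rw [frobenius_def, ← pow_succ', mul_pow, hβ i, mul_one, hνc]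
  set circle := {x : GaloisField N 2 | x ^ (N + 1) = ν 0 ^ (N + 1)}
  have hcircle : circle.ncard = N + 1 :=
    (ncard_setOf_pow_eq_pow _ (hν 0)).trans (GaloisField.ncard_setOf_pow_succ_eq_one N)
  have hscale := ncard_setOf_pow_eq_one_and_scaled (N + 1) hν hνc
  refine ⟨?_, (hscale fun μ => μ 0 = μ 1 ∧ μ 2 = μ 3).trans ?_,
    (hscale fun μ => μ 1 = μ 2 ∧ μ 0 = μ 3).trans ?_, ?_⟩
  · ext β
    simp only [mem_ofPred_eq, mem_union, ← and_or_left]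
    refine and_congr_right fun hβ => sub_add_sub_eq_zero_and_isFixedPt_iff h2
      (GaloisField.frobenius_involutive N) ?_
    rw [hμ β hβ, hμ β hβ, hμ β hβ, hμ β hβ]
  · exact (ncard_setOf_forall_mem_and_eq_and_eq circle).trans (by rw [hcircle])
  · exact (ncard_setOf_forall_mem_and_eq_and_eq' circle).trans (by rw [hcircle])
  · rw [← ofPred_and]
    simp only [← and_and_left]
    exact (hscale fun μ => (μ 0 = μ 1 ∧ μ 2 = μ 3) ∧ μ 1 = μ 2 ∧ μ 0 = μ 3).trans
      ((ncard_setOf_forall_mem_and_all_eq circle).trans hcircle)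
end

section
/- Let F_{N²} = F_N(√D) and suppose μ₁,μ₂,μ₃,μ₄ ∈ F_{N²}* satisfy μ₁ - μ₂ = μ₄ - μ₃, conj(μ₃)μ₄ = μ₁conj(μ₂), and μ₂ ≠ μ₃. Then μ₄ = μ₃·(N₂ - conj(μ₂)μ₃)/(N₃ - conj(μ₂)μ₃) and μ₁ = μ₂·(μ₂conj(μ₃) - N₃)/(μ₂conj(μ₃) - N₂), where Nᵢ = Norm(μᵢ); in particular μ₄ and μ₁ are determined by μ₂ and μ₃. -/
/-- In `F_{N²}` with conjugation `x ↦ x^N` and norm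
`Nᵢ = μᵢ·conj(μᵢ)`, if nonzero `μ₁,μ₂,μ₃,μ₄` satisfy `μ₁ - μ₂ = μ₄ - μ₃`,
`conj(μ₃)μ₄ = μ₁·conj(μ₂)` and `μ₂ ≠ μ₃`, then
`μ₄ = μ₃(N₂ - conj(μ₂)μ₃)/(N₃ - conj(μ₂)μ₃)` and
`μ₁ = μ₂(μ₂·conj(μ₃) - N₃)/(μ₂·conj(μ₃) - N₂)`. -/
theorem mu_one_four_determined
    (N : ℕ) [Fact N.Prime] (hodd : Odd N)
    (μ₁ μ₂ μ₃ μ₄ : GaloisField N 2)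
    (h1 : μ₁ ≠ 0) (h2 : μ₂ ≠ 0) (h3 : μ₃ ≠ 0) (h4 : μ₄ ≠ 0)
    (hsum : μ₁ - μ₂ = μ₄ - μ₃)
    (hK : μ₃ ^ N * μ₄ = μ₁ * μ₂ ^ N)
    (hne : μ₂ ≠ μ₃) :
    μ₄ = μ₃ * (μ₂ * μ₂ ^ N - μ₂ ^ N * μ₃) / (μ₃ * μ₃ ^ N - μ₂ ^ N * μ₃) ∧
    μ₁ = μ₂ * (μ₂ * μ₃ ^ N - μ₃ * μ₃ ^ N) / (μ₂ * μ₃ ^ N - μ₂ * μ₂ ^ N) := by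
  have hpow : μ₂ ^ N ≠ μ₃ ^ N := by
    intro h
    apply hne
    have := frobenius_inj (GaloisField N 2) N
    apply this
    simpa [frobenius_def] using h
  have hd : μ₃ ^ N - μ₂ ^ N ≠ 0 := sub_ne_zero.mpr (Ne.symm hpow)
  have key : μ₄ * (μ₃ ^ N - μ₂ ^ N) = μ₂ ^ N * (μ₂ - μ₃) := by
    linear_combination hK + μ₂ ^ N * hsum
  constructor
  · rw [eq_div_iff (by
      intro h
      apply hd
      have : μ₃ * (μ₃ ^ N - μ₂ ^ N) = 0 := by linear_combination h
      rcases mul_eq_zero.mp this with h' | h'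
      · exact absurd h' h3
      · exact h')]
    linear_combination μ₃ * hK + μ₃ * μ₂ ^ N * hsum
  · rw [eq_div_iff (by
      intro h
      apply hd
      have : μ₂ * (μ₃ ^ N - μ₂ ^ N) = 0 := by linear_combination h
      rcases mul_eq_zero.mp this with h' | h'
      · exact absurd h' h2
      · exact h')]
    linear_combination μ₂ * hK + μ₂ * μ₃ ^ N * hsum
end
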